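/- Let g be differentiable and suppose G vanishes on the focal curve of g. For f(x) = g(c·x) with c ≠ 0, every point (x, y) of the focal curve of f with 1 + (c - 1)x ≠ 0 (equivalently 1 - (1 - c)x ≠ 0) satisfies G(cx/(1 + (c - 1)x), cy/(1 + (c - 1)x)) = 0. -/

import Mathlib

/-!
The tangent line of `f = g (c * ·)` at `t` has slope `c * g'(c t)` and the same intercept
`g (c t) - c t g'(c t)` as the tangent line of `g` at `c t`. A focal point depends only on the
slope `s` and intercept `b` of a tangent line, namely `(1, b) / (1 - s)`, and the projective map
`(x, y) ↦ (c x, c y) / (1 + (c - 1) x)` turns the slope `c s` into `s` while keeping `b`.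
-/

noncomputable def focalPoint (s b : ℝ) : ℝ × ℝ := (1 / (1 - s), b / (1 - s))

noncomputable def focalRescale (c : ℝ) (p : ℝ × ℝ) : ℝ × ℝ :=
  (c * p.1 / (1 + (c - 1) * p.1), c * p.2 / (1 + (c - 1) * p.1))

section

variable {c s : ℝ}

theorem one_add_sub_one_mul_one_div_one_sub_mul (hs : 1 - c * s ≠ 0) :
    1 + (c - 1) * (1 / (1 - c * s)) = c * (1 - s) / (1 - c * s) := by
  field_simp
  ring

theorem one_sub_ne_zero_of_one_add_sub_one_mul_ne_zero (hs : 1 - c * s ≠ 0)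
    (hx : 1 + (c - 1) * (1 / (1 - c * s)) ≠ 0) : 1 - s ≠ 0 := by
  rw [one_add_sub_one_mul_one_div_one_sub_mul hs] at hx
  exact right_ne_zero_of_mul (div_ne_zero_iff.mp hx).1

theorem focalRescale_focalPoint (b : ℝ) (hs : 1 - c * s ≠ 0)
    (hx : 1 + (c - 1) * (1 / (1 - c * s)) ≠ 0) :
    focalRescale c (focalPoint (c * s) b) = focalPoint s b := by
  have hs' := one_sub_ne_zero_of_one_add_sub_one_mul_ne_zero hs hx
  have hc : c ≠ 0 := by
    rintro rfl
    simp at hx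
  simp only [focalRescale, focalPoint, one_add_sub_one_mul_one_div_one_sub_mul hs, Prod.mk.injEq]
  constructor <;> field_simp

end

theorem stmt_12_general (g : ℝ → ℝ) (G : ℝ × ℝ → ℝ)
    (hG : ∀ t : ℝ, deriv g t ≠ 1 →
      G (1 / (1 - deriv g t), (g t - t * deriv g t) / (1 - deriv g t)) = 0)
    (c : ℝ) (f : ℝ → ℝ) (hf : ∀ x, f x = g (c * x))
    (t : ℝ) (ht : deriv f t ≠ 1)
    (hx : 1 + (c - 1) * (1 / (1 - deriv f t)) ≠ 0) :
    let x := 1 / (1 - deriv f t)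
    let y := (f t - t * deriv f t) / (1 - deriv f t)
    G (c * x / (1 + (c - 1) * x), c * y / (1 + (c - 1) * x)) = 0 := by
  intro x y
  have hf' : deriv f t = c * deriv g (c * t) := by
    rw [funext hf, deriv_comp_mul_left, smul_eq_mul]
  have hintercept : f t - t * deriv f t = g (c * t) - c * t * deriv g (c * t) := by
    rw [hf', hf]; ring
  have hs : 1 - c * deriv g (c * t) ≠ 0 := hf' ▸ sub_ne_zero.mpr ht.symm
  change G (focalRescale c (focalPoint (deriv f t) (f t - t * deriv f t))) = 0
  rw [hf'] at hx
  rw [hintercept, hf', focalRescale_focalPoint _ hs hx]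
  exact hG (c * t) (sub_ne_zero.mp (one_sub_ne_zero_of_one_add_sub_one_mul_ne_zero hs hx)).symm

/-- If `G` vanishes on the focal curve of `g`, then for `f x = g (c * x)` with
`c ≠ 0`, every focal point `(x, y)` of `f` with `1 + (c - 1)x ≠ 0` satisfies
`G (c*x/(1 + (c-1)*x), c*y/(1 + (c-1)*x)) = 0`. -/
theorem stmt_12 (g : ℝ → ℝ) (hg : Differentiable ℝ g) (G : ℝ × ℝ → ℝ)
    (hG : ∀ t : ℝ, deriv g t ≠ 1 →
      G (1 / (1 - deriv g t), (g t - t * deriv g t) / (1 - deriv g t)) = 0)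
    (c : ℝ) (hc : c ≠ 0) (f : ℝ → ℝ) (hf : ∀ x, f x = g (c * x))
    (t : ℝ) (ht : deriv f t ≠ 1)
    (hx : 1 + (c - 1) * (1 / (1 - deriv f t)) ≠ 0) :
    let x := 1 / (1 - deriv f t)
    let y := (f t - t * deriv f t) / (1 - deriv f t)
    G (c * x / (1 + (c - 1) * x), c * y / (1 + (c - 1) * x)) = 0 :=
  stmt_12_general g G hG c f hf t ht hx
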